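/- arXiv:2605.26008 — 3 statements merged into one kernel-verified Lean document; each statement's English description precedes it below -/
import Mathlib

section
/- For all real numbers a and b with a + b ≠ 0, one has (tanh(a) + tanh(b))/(a + b) ≤ (1/2)·(tanh(a)/a + tanh(b)/b), where tanh(x)/x is interpreted as 1 at x = 0. -/
/-- `tanh x / x`, extended continuously by the value `1` at `x = 0`. -/
noncomputable def thDiv (x : ℝ) : ℝ := if x = 0 then 1 else Real.tanh x / x

/-!
With `f x = tanh x / x` (and `f 0 = 1`) one has `tanh x = x * f x`, hence
`(tanh a + tanh b) / (a + b) = (f a + f b) / 2 + (a² - b²) (f a - f b) / (2 (a + b)²)`.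
The function `f` is even and decreasing in `|x|`, so the last term is nonpositive: on `(0, ∞)`
the sign of `f'` is that of `2x - sinh 2x`, and `f ≤ 1 = f 0` because `tanh` is `1`-Lipschitz.
-/

open Set

namespace Real

theorem hasDerivAt_tanh (x : ℝ) : HasDerivAt tanh (1 / cosh x ^ 2) x := by
  have h := (hasDerivAt_sinh x).div (hasDerivAt_cosh x) (cosh_pos x).ne'
  rw [show sinh / cosh = tanh from (funext tanh_eq_sinh_div_cosh).symm] at h
  rwa [← sq, ← sq, cosh_sq_sub_sinh_sq] at h

theorem abs_tanh_le_abs (x : ℝ) : |tanh x| ≤ |x| := by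
  have bound : ∀ y ∈ (univ : Set ℝ), ‖1 / cosh y ^ 2‖ ≤ 1 := fun y _ => by
    rw [norm_div, norm_one, norm_pow, Real.norm_eq_abs, abs_of_pos (cosh_pos y)]
    exact div_le_one_of_le₀ (one_le_pow₀ (one_le_cosh y)) (by positivity)
  simpa using convex_univ.norm_image_sub_le_of_norm_hasDerivWithin_le
    (fun y _ => (hasDerivAt_tanh y).hasDerivWithinAt) bound (mem_univ 0) (mem_univ x)

theorem antitoneOn_tanh_div_self : AntitoneOn (fun x => tanh x / x) (Ioi 0) := by
  refine antitoneOn_of_hasDerivWithinAt_nonpos (convex_Ioi 0)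
    (fun x hx => ((hasDerivAt_tanh x).continuousAt.div continuousAt_id
      (ne_of_gt hx)).continuousWithinAt)
    (fun x hx => ((hasDerivAt_tanh x).div (hasDerivAt_id x)
      (ne_of_gt (interior_subset hx : 0 < x))).hasDerivWithinAt) fun x hx => ?_
  rw [interior_Ioi, mem_Ioi] at hx
  have hsinh : x ≤ sinh x * cosh x := by
    have := self_le_sinh_iff.2 (by positivity : 0 ≤ 2 * x)
    rw [sinh_two_mul] at this
    linarith
  have hle : 1 / cosh x ^ 2 * x ≤ tanh x := by
    rw [tanh_eq_sinh_div_cosh, one_div_mul_eq_div, div_le_div_iff₀ (by positivity) (cosh_pos x)]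
    nlinarith [cosh_pos x]
  exact div_nonpos_of_nonpos_of_nonneg (by simpa using hle) (sq_nonneg x)

end Real

theorem thDiv_zero : thDiv 0 = 1 := if_pos rfl

theorem thDiv_of_ne_zero {x : ℝ} (hx : x ≠ 0) : thDiv x = Real.tanh x / x := if_neg hx

theorem mul_thDiv (x : ℝ) : x * thDiv x = Real.tanh x := by
  rcases eq_or_ne x 0 with rfl | hx
  · rw [zero_mul, Real.tanh_zero]
  · rw [thDiv_of_ne_zero hx, mul_div_cancel₀ _ hx]

theorem thDiv_neg (x : ℝ) : thDiv (-x) = thDiv x := by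
  rcases eq_or_ne x 0 with rfl | hx
  · rw [neg_zero]
  · rw [thDiv_of_ne_zero hx, thDiv_of_ne_zero (neg_ne_zero.2 hx), Real.tanh_neg, neg_div_neg_eq]

theorem thDiv_abs (x : ℝ) : thDiv |x| = thDiv x := by
  rcases abs_choice x with h | h <;> rw [h]
  exact thDiv_neg x

theorem thDiv_le_one (x : ℝ) : thDiv x ≤ 1 := by
  rcases eq_or_ne x 0 with rfl | hx
  · exact thDiv_zero.le
  · rw [thDiv_of_ne_zero hx]
    calc Real.tanh x / x ≤ |Real.tanh x / x| := le_abs_self _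
      _ = |Real.tanh x| / |x| := abs_div _ _
      _ ≤ 1 := div_le_one_of_le₀ (Real.abs_tanh_le_abs x) (abs_nonneg x)

theorem thDiv_le_thDiv_of_abs_le {x y : ℝ} (h : |x| ≤ |y|) : thDiv y ≤ thDiv x := by
  rw [← thDiv_abs x, ← thDiv_abs y]
  rcases (abs_nonneg x).eq_or_lt with h0 | h0
  · rw [← h0, thDiv_zero]
    exact thDiv_le_one _
  · rw [thDiv_of_ne_zero h0.ne', thDiv_of_ne_zero (h0.trans_le h).ne']
    exact Real.antitoneOn_tanh_div_self h0 (h0.trans_le h) h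

theorem sq_sub_sq_mul_thDiv_sub_nonpos (a b : ℝ) : (a ^ 2 - b ^ 2) * (thDiv a - thDiv b) ≤ 0 := by
  rcases le_total |a| |b| with h | h
  · exact mul_nonpos_of_nonpos_of_nonneg (sub_nonpos.2 (sq_le_sq.2 h))
      (sub_nonneg.2 (thDiv_le_thDiv_of_abs_le h))
  · exact mul_nonpos_of_nonneg_of_nonpos (sub_nonneg.2 (sq_le_sq.2 h))
      (sub_nonpos.2 (thDiv_le_thDiv_of_abs_le h))

/-- For all real `a`, `b` with `a + b ≠ 0`,
`(tanh a + tanh b)/(a + b) ≤ (1/2) * (tanh a / a + tanh b / b)`,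
where `tanh x / x` is interpreted as `1` at `x = 0`. -/
theorem tanh_sum_div_le_half_add (a b : ℝ) (hab : a + b ≠ 0) :
    (Real.tanh a + Real.tanh b) / (a + b) ≤ (1 / 2) * (thDiv a + thDiv b) := by
  calc (Real.tanh a + Real.tanh b) / (a + b)
      = (a * thDiv a + b * thDiv b) / (a + b) := by rw [mul_thDiv, mul_thDiv]
    _ = 1 / 2 * (thDiv a + thDiv b)
          + (a ^ 2 - b ^ 2) * (thDiv a - thDiv b) / (2 * (a + b) ^ 2) := by
        field_simp
        ring
    _ ≤ 1 / 2 * (thDiv a + thDiv b) :=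
        add_le_of_nonpos_right (div_nonpos_of_nonpos_of_nonneg
          (sq_sub_sq_mul_thDiv_sub_nonpos a b) (by positivity))
end

section
/- For every β > 0 and E ∈ ℝ, one has tanh(βE/2) = −(2/β)·∑_{n∈ℤ} 1/(i·ω_n − E), where ω_n = π(2n+1)/β and the sum is understood as the principal value limit lim_{N→∞} ∑_{n=−N}^{N−1}. -/
/-!
With `w = 1/2 + i βE/(2π)` one has `i ω_n - E = (2πi/β)(w + n)`, so the partial sums are
`β/(2πi)` times `∑_{n=-N}^{N-1} 1/(w + n)`. These converge to `π cot(π w)` by the Mittag-Leffler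
expansion of the cotangent (dropping the endpoint term `1/(w + N) → 0` from the symmetric sums),
and `cot(π/2 + iβE/2) = -tan(iβE/2) = -i tanh(βE/2)`.
-/

open Complex Filter Finset SummationFilter Topology
open scoped Real

lemma sum_Icc_one_div_add_intCast (x : ℂ) (N : ℕ) :
    ∑ n ∈ Icc (-N : ℤ) N, 1 / (x + n) = 1 / x + ∑ j ∈ range N, cotTerm x j := by
  induction N with
  | zero => simp
  | succ N ih =>
    rw [Nat.cast_succ, sum_Icc_succ_eq_add_endpoints, ih, sum_range_succ]
    push_cast
    ring

lemma hasSum_one_div_add_intCast_symmetricIcc {x : ℂ} (hx : x ∈ integerComplement) :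
    HasSum (fun n : ℤ ↦ 1 / (x + n)) (π * cot (π * x)) (symmetricIcc ℤ) := by
  rw [hasSum_symmetricIcc_iff]
  simp_rw [sum_Icc_one_div_add_intCast]
  simpa using (tendsto_logDeriv_euler_cot_sub hx).const_add (1 / x)

lemma tendsto_one_div_add_natCast (x : ℂ) :
    Tendsto (fun N : ℕ ↦ 1 / (x + N)) atTop (𝓝 0) := by
  simpa [Function.comp_def] using tendsto_inv₀_cobounded.comp
    ((tendsto_const_add_cobounded x).comp tendsto_natCast_atTop_cobounded)

lemma hasSum_one_div_add_intCast_symmetricIco {x : ℂ} (hx : x ∈ integerComplement) :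
    HasSum (fun n : ℤ ↦ 1 / (x + n)) (π * cot (π * x)) (symmetricIco ℤ) :=
  (hasSum_one_div_add_intCast_symmetricIcc hx).hasSum_symmetricIco_of_hasSum_symmetricIcc
    (by simpa using (tendsto_one_div_add_natCast x).neg)

namespace Complex

lemma half_add_mul_I_mem_integerComplement (y : ℝ) : 1 / 2 + y * I ∈ integerComplement := by
  rintro ⟨n, hn⟩
  have hre : (n : ℝ) = 1 / 2 := by simpa using congrArg re hn
  have : 2 * n = 1 := by exact_mod_cast (by linarith : (2 * n : ℝ) = 1)
  omega

lemma cot_add_pi_div_two (z : ℂ) : cot (z + π / 2) = -tan z := by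
  rw [cot_eq_cos_div_sin, cos_add_pi_div_two, sin_add_pi_div_two, tan_eq_sin_div_cos, neg_div]

lemma cot_pi_mul_half_add_mul_I (y : ℂ) : cot (π * (1 / 2 + y * I)) = -(tanh (π * y) * I) := by
  rw [show (π : ℂ) * (1 / 2 + y * I) = π * y * I + π / 2 by ring, cot_add_pi_div_two, tan_mul_I]

end Complex

lemma inv_I_mul_matsubaraFreq_sub_eq {β : ℝ} (hβ : β ≠ 0) (E : ℝ) (n : ℤ) :
    (I * ((π * (2 * (n : ℝ) + 1) / β : ℝ) : ℂ) - E)⁻¹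
      = β / (2 * π * I) * (1 / (1 / 2 + (β * E / (2 * π) : ℝ) * I + n)) := by
  have hβ' : (β : ℂ) ≠ 0 := by exact_mod_cast hβ
  have hπ : (π : ℂ) ≠ 0 := by exact_mod_cast Real.pi_ne_zero
  have hfactor : I * ((π * (2 * (n : ℝ) + 1) / β : ℝ) : ℂ) - E
      = 2 * π * I / β * (1 / 2 + (β * E / (2 * π) : ℝ) * I + n) := by
    push_cast
    field_simp
    linear_combination (-E * β) * I_sq
  rw [hfactor, mul_inv, inv_div, ← one_div]

/-- Matsubara series representation of `tanh`: for `β > 0` and `E ∈ ℝ`,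
`tanh(βE/2) = −(2/β) ∑_{n ∈ ℤ} 1/(i ω_n − E)` with `ω_n = π(2n+1)/β`,
where the sum is the principal value limit `lim_{N → ∞} ∑_{n = −N}^{N−1}`.
Equivalently, the symmetric partial sums tend to `−(β/2) tanh(βE/2)`. -/
theorem matsubara_sum_tanh (β E : ℝ) (hβ : 0 < β) :
    Filter.Tendsto
      (fun N : ℕ => ∑ n ∈ Finset.Icc (-(N : ℤ)) ((N : ℤ) - 1),
        (Complex.I * ((Real.pi * (2 * (n : ℝ) + 1) / β : ℝ) : ℂ) - (E : ℂ))⁻¹)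
      Filter.atTop (nhds ((-(β / 2) * Real.tanh (β * E / 2) : ℝ) : ℂ)) := by
  have hlimit : β / (2 * π * I) * (π * cot (π * (1 / 2 + (β * E / (2 * π) : ℝ) * I)))
      = ((-(β / 2) * Real.tanh (β * E / 2) : ℝ) : ℂ) := by
    have hπ : (π : ℂ) ≠ 0 := by exact_mod_cast Real.pi_ne_zero
    rw [cot_pi_mul_half_add_mul_I, show (π : ℂ) * (β * E / (2 * π) : ℝ) = β * E / 2 by
      push_cast; field_simp]
    push_cast
    field_simp
  have hsum := (hasSum_one_div_add_intCast_symmetricIco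
    (half_add_mul_I_mem_integerComplement (β * E / (2 * π)))).mul_left (β / (2 * π * I))
  rw [hasSum_symmetricIco_int_iff, hlimit] at hsum
  refine hsum.congr fun N ↦ ?_
  rw [Icc_sub_one_right_eq_Ico]
  exact sum_congr rfl fun n _ ↦ (inv_I_mul_matsubaraFreq_sub_eq hβ.ne' E n).symm
end

section
/- Let φ* ∈ L²(ℝᵈ) with ‖φ*‖ = 1 and define c(q) := ∫_{ℝᵈ} cos²(q·r/2)|φ*(r)|² dr − (∫_{ℝᵈ} cos(q·r/2)|φ*(r)|² dr)². Then sup_{q∈ℝᵈ} c(q) < 1, i.e., there exists ε > 0 such that c(q) ≤ 1 − ε for all q ∈ ℝᵈ. -/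
/-!
With `f = φ²` a probability density and `F q = ∫ cos ⟪q, r⟫ f r`, the half-angle formula
gives `c q = (1 + F q) / 2 - F (q / 2) ^ 2`. The function `F` is continuous, tends to `0` at
infinity (Riemann–Lebesgue), and satisfies `F q < 1` for `q ≠ 0` because `cos ⟪q, ·⟫ = 1` only
on a countable union of hyperplanes, which is Lebesgue-null. Hence `c` is continuous, `c < 1`
pointwise and `c → 1/2` at infinity, so `sup c < 1`.
-/

open MeasureTheory Filter Topology
open scoped RealInnerProductSpace Real

theorem Continuous.exists_lt_forall_le_of_eventually_le {X α : Type*} [TopologicalSpace X]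
    [Nonempty X] [LinearOrder α] [TopologicalSpace α] [OrderClosedTopology α] {g : X → α}
    (hg : Continuous g) {a b : α} (hb : b < a) (hlt : ∀ x, g x < a)
    (hev : ∀ᶠ x in cocompact X, g x ≤ b) : ∃ m < a, ∀ x, g x ≤ m := by
  obtain ⟨x₀⟩ := ‹Nonempty X›
  obtain ⟨x, hx⟩ := (hg.max continuous_const).exists_forall_ge' x₀
    (hev.mono fun x hx => by rw [max_eq_right hx]; exact le_max_right _ _)
  exact ⟨max (g x) b, max_lt (hlt x) hb, fun y => (le_max_left _ _).trans (hx y)⟩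

theorem tendsto_const_smul_cocompact {G₀ X : Type*} [GroupWithZero G₀] [TopologicalSpace X]
    [MulAction G₀ X] [ContinuousConstSMul G₀ X] {c : G₀} (hc : c ≠ 0) :
    Tendsto (fun x : X => c • x) (cocompact X) (cocompact X) :=
  (Homeomorph.smulOfNeZero c hc).map_cocompact.le

section

variable {V : Type*} [NormedAddCommGroup V] [InnerProductSpace ℝ V] [MeasurableSpace V]
  [BorelSpace V] {μ : Measure V} {f : V → ℝ}

theorem integrable_cos_inner_mul (hf : Integrable f μ) (q : V) :
    Integrable (fun r => Real.cos ⟪q, r⟫ * f r) μ :=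
  hf.bdd_mul (c := 1) (by fun_prop) (.of_forall fun r => by simpa using Real.abs_cos_le_one _)

theorem continuous_integral_cos_inner_mul (hf : Integrable f μ) :
    Continuous fun q : V => ∫ r, Real.cos ⟪q, r⟫ * f r ∂μ :=
  continuous_of_dominated (fun q => (integrable_cos_inner_mul hf q).aestronglyMeasurable)
    (fun q => .of_forall fun r => by
      simpa [abs_mul] using mul_le_of_le_one_left (abs_nonneg _) (Real.abs_cos_le_one _))
    hf.norm (.of_forall fun r => by fun_prop)

theorem integral_cos_sq_half_inner_mul (hf : Integrable f μ) (q : V) :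
    ∫ r, Real.cos (⟪q, r⟫ / 2) ^ 2 * f r ∂μ =
      ((∫ r, f r ∂μ) + ∫ r, Real.cos ⟪q, r⟫ * f r ∂μ) / 2 := by
  rw [← integral_add hf (integrable_cos_inner_mul hf q), ← integral_div]
  congr 1 with r
  rw [Real.cos_sq, show 2 * (⟪q, r⟫ / 2) = ⟪q, r⟫ by ring]
  ring

variable [FiniteDimensional ℝ V]

theorem ae_cos_inner_ne_one (μ : Measure V) [μ.IsAddHaarMeasure] {q : V} (hq : q ≠ 0) :
    ∀ᵐ r ∂μ, Real.cos ⟪q, r⟫ ≠ 1 := by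
  have hsurj : Function.Surjective (innerₛₗ ℝ q) :=
    LinearMap.surjective fun h => hq (inner_self_eq_zero.1 (LinearMap.congr_fun h q))
  have hcount : {x : ℝ | Real.cos x = 1}.Countable := by
    convert Set.countable_range fun n : ℤ => (n : ℝ) * (2 * π)
    ext x
    simp [Real.cos_eq_one_iff]
  exact (ae_comp_linearMap_mem_iff _ μ volume hsurj
    (measurableSet_eq_fun Real.measurable_cos measurable_const).compl).2
    (hcount.ae_notMem volume)

theorem integral_cos_inner_mul_lt [μ.IsAddHaarMeasure] (hf : Integrable f μ) (hf0 : 0 ≤ f)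
    (hpos : 0 < ∫ r, f r ∂μ) {q : V} (hq : q ≠ 0) :
    ∫ r, Real.cos ⟪q, r⟫ * f r ∂μ < ∫ r, f r ∂μ := by
  rw [← sub_pos, ← integral_sub hf (integrable_cos_inner_mul hf q)]
  have hnonneg : ∀ r, 0 ≤ f r - Real.cos ⟪q, r⟫ * f r := fun r => by
    nlinarith [mul_nonneg (sub_nonneg.2 (Real.cos_le_one ⟪q, r⟫)) (hf0 r)]
  rw [integral_pos_iff_support_of_nonneg hnonneg (hf.sub (integrable_cos_inner_mul hf q))]
  rw [integral_pos_iff_support_of_nonneg hf0 hf] at hpos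
  refine hpos.trans_le (measure_mono_ae ?_)
  filter_upwards [ae_cos_inner_ne_one μ hq] with r hr hfr
  change f r - Real.cos ⟪q, r⟫ * f r ≠ 0
  rw [show f r - Real.cos ⟪q, r⟫ * f r = (1 - Real.cos ⟪q, r⟫) * f r by ring]
  exact mul_ne_zero (sub_ne_zero.2 hr.symm) hfr

theorem tendsto_integral_cos_inner_mul_cocompact (hf : Integrable f) :
    Tendsto (fun q : V => ∫ r, Real.cos ⟪q, r⟫ * f r) (cocompact V) (𝓝 0) := by
  -- the integral is the real part of the Fourier transform of `f` at `q / (2π)`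
  have hRL := (Complex.continuous_re.tendsto 0).comp
    ((tendsto_integral_exp_inner_smul_cocompact fun r => (f r : ℂ)).comp
      (tendsto_const_smul_cocompact (c := (2 * π)⁻¹) (by positivity)))
  rw [Complex.zero_re] at hRL
  refine hRL.congr fun q => ?_
  rw [Function.comp_apply, Function.comp_apply, ← RCLike.re_to_complex,
    ← integral_re ((Real.fourierIntegral_convergent_iff _).2 hf.ofReal)]
  congr 1 with r
  have hphase : 2 * π * -⟪r, (2 * π)⁻¹ • q⟫ = -⟪q, r⟫ := by
    rw [real_inner_smul_right, real_inner_comm]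
    field_simp
  rw [Circle.smul_def, Real.fourierChar_apply, smul_eq_mul, RCLike.re_to_complex,
    Complex.re_mul_ofReal, hphase, Complex.exp_ofReal_mul_I_re, Real.cos_neg]

end

theorem variance_cos_sup_lt_one_general (d : ℕ) (φ : EuclideanSpace ℝ (Fin d) → ℝ)
    (hnorm : ∫ r, (φ r) ^ 2 = 1) :
    ∃ ε > 0, ∀ q : EuclideanSpace ℝ (Fin d),
      (∫ r, Real.cos (⟪q, r⟫ / 2) ^ 2 * (φ r) ^ 2)
          - (∫ r, Real.cos (⟪q, r⟫ / 2) * (φ r) ^ 2) ^ 2 ≤ 1 - ε := by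
  have hf : Integrable fun r => φ r ^ 2 := .of_integral_ne_zero (by simp [hnorm])
  set F := fun q : EuclideanSpace ℝ (Fin d) => ∫ r, Real.cos ⟪q, r⟫ * φ r ^ 2 with hF
  have hc : ∀ q, (∫ r, Real.cos (⟪q, r⟫ / 2) ^ 2 * (φ r) ^ 2)
      - (∫ r, Real.cos (⟪q, r⟫ / 2) * (φ r) ^ 2) ^ 2 = (1 + F q) / 2 - F ((2 : ℝ)⁻¹ • q) ^ 2 :=
    fun q => by
      simp only [hF, integral_cos_sq_half_inner_mul hf, hnorm, real_inner_smul_left,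
        inv_mul_eq_div]
  simp only [hc]
  have hlt : ∀ q, (1 + F q) / 2 - F ((2 : ℝ)⁻¹ • q) ^ 2 < 1 := by
    intro q
    rcases eq_or_ne q 0 with rfl | hq
    · simp [hF, hnorm]
    · have hFq := integral_cos_inner_mul_lt hf (fun r => sq_nonneg _) (by simp [hnorm]) hq
      rw [hnorm] at hFq
      nlinarith [sq_nonneg (F ((2 : ℝ)⁻¹ • q))]
  have hcont : Continuous fun q => (1 + F q) / 2 - F ((2 : ℝ)⁻¹ • q) ^ 2 := by
    have := continuous_integral_cos_inner_mul hf (μ := volume)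
    fun_prop
  have hlim : Tendsto (fun q => (1 + F q) / 2 - F ((2 : ℝ)⁻¹ • q) ^ 2) (cocompact _)
      (𝓝 (1 / 2)) := by
    have hF0 := tendsto_integral_cos_inner_mul_cocompact hf
    simpa using ((hF0.const_add 1).div_const 2).sub
      ((hF0.comp (tendsto_const_smul_cocompact (by norm_num))).pow 2)
  obtain ⟨m, hm, hle⟩ := hcont.exists_lt_forall_le_of_eventually_le
    (by norm_num : (3 / 4 : ℝ) < 1) hlt (hlim.eventually (eventually_le_nhds (by norm_num)))
  exact ⟨1 - m, by linarith, fun q => by linarith [hle q]⟩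

/-- Let `φ* ∈ L²(ℝᵈ)` with `‖φ*‖ = 1` and
`c(q) = ∫ cos²(q·r/2)|φ*(r)|² dr − (∫ cos(q·r/2)|φ*(r)|² dr)²`.
Then `sup_q c(q) < 1`: there is `ε > 0` with `c(q) ≤ 1 − ε` for all `q`. -/
theorem variance_cos_sup_lt_one (d : ℕ) (φ : EuclideanSpace ℝ (Fin d) → ℝ)
    (hmeas : Measurable φ)
    (hnorm : ∫ r, (φ r) ^ 2 = 1) :
    ∃ ε > 0, ∀ q : EuclideanSpace ℝ (Fin d),
      (∫ r, Real.cos (⟪q, r⟫ / 2) ^ 2 * (φ r) ^ 2)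
          - (∫ r, Real.cos (⟪q, r⟫ / 2) * (φ r) ^ 2) ^ 2 ≤ 1 - ε :=
  variance_cos_sup_lt_one_general d φ hnorm
end
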